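/- arXiv:2408.15951 — 7 statements merged into one kernel-verified Lean document; each statement's English description precedes it below -/
import Mathlib

section
/- If H is an isometric subgraph of a connected graph G and X is a dual general position set of G, then X ∩ V(H) is a dual general position set of H. -/
open SimpleGraph

/-- `u` and `v` are `X`-positionable in `G`: every shortest `u,v`-path meets `X`
only possibly in its endpoints. -/
def Positionable {V : Type*} (G : SimpleGraph V) (X : Set V) (u v : V) : Prop :=
  ∀ p : G.Walk u v, p.length = G.dist u v → ∀ w ∈ p.support, w ∈ X → w = u ∨ w = v

/-- `X` is a general position set of `G`. -/
def IsGPSet {V : Type*} (G : SimpleGraph V) (X : Set V) : Prop :=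
  ∀ u ∈ X, ∀ v ∈ X, Positionable G X u v

/-- `X` is an outer general position set of `G`. -/
def IsOuterGPSet {V : Type*} (G : SimpleGraph V) (X : Set V) : Prop :=
  IsGPSet G X ∧ ∀ u ∈ X, ∀ v ∉ X, Positionable G X u v

/-- `X` is a dual general position set of `G`. -/
def IsDualGPSet {V : Type*} (G : SimpleGraph V) (X : Set V) : Prop :=
  IsGPSet G X ∧ ∀ u ∉ X, ∀ v ∉ X, Positionable G X u v

/-- `X` is a total general position set of `G`. -/
def IsTotalGPSet {V : Type*} (G : SimpleGraph V) (X : Set V) : Prop :=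
  ∀ u v : V, Positionable G X u v

/-- The outer general position number. -/
noncomputable def gpo {V : Type*} (G : SimpleGraph V) : ℕ :=
  sSup {n | ∃ X : Set V, IsOuterGPSet G X ∧ X.ncard = n}

/-- The dual general position number. -/
noncomputable def gpd {V : Type*} (G : SimpleGraph V) : ℕ :=
  sSup {n | ∃ X : Set V, IsDualGPSet G X ∧ X.ncard = n}

/-- The total general position number. -/
noncomputable def gpt {V : Type*} (G : SimpleGraph V) : ℕ :=
  sSup {n | ∃ X : Set V, IsTotalGPSet G X ∧ X.ncard = n}

/-- The closed neighborhood `N[u]`. -/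
def closedNbhd {V : Type*} (G : SimpleGraph V) (u : V) : Set V :=
  insert u (G.neighborSet u)

/-- A vertex is simplicial if its closed neighborhood induces a complete subgraph. -/
def IsSimplicial {V : Type*} (G : SimpleGraph V) (u : V) : Prop :=
  ∀ x ∈ closedNbhd G u, ∀ y ∈ closedNbhd G u, x ≠ y → G.Adj x y

/-- `s(G)`, the number of simplicial vertices. -/
noncomputable def simplicialNum {V : Type*} (G : SimpleGraph V) : ℕ :=
  {u | IsSimplicial G u}.ncard

/-- `u` is maximally distant from `v`. -/
def MaxDistant {V : Type*} (G : SimpleGraph V) (u v : V) : Prop :=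
  ∀ w, G.Adj u w → G.dist v w ≤ G.dist v u

/-- `u` and `v` are mutually maximally distant. -/
def MMD {V : Type*} (G : SimpleGraph V) (u v : V) : Prop :=
  MaxDistant G u v ∧ MaxDistant G v u

/-- `b(G)`, the number of boundary vertices (vertices MMD with some vertex). -/
noncomputable def boundaryNum {V : Type*} (G : SimpleGraph V) : ℕ :=
  {u | ∃ v, MMD G u v}.ncard

/-- `u` and `v` are true twins: distinct with equal closed neighborhoods. -/
def TrueTwins {V : Type*} (G : SimpleGraph V) (u v : V) : Prop :=
  u ≠ v ∧ closedNbhd G u = closedNbhd G v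

/-- The independence number of `G`. -/
noncomputable def indepNum {V : Type*} (G : SimpleGraph V) : ℕ :=
  sSup {n | ∃ S : Set V, (∀ u ∈ S, ∀ v ∈ S, u ≠ v → ¬ G.Adj u v) ∧ S.ncard = n}

/-- The `k`-independence number `α_k(G)`. -/
noncomputable def kIndepNum {V : Type*} (G : SimpleGraph V) (k : ℕ) : ℕ :=
  sSup {n | ∃ S : Set V, (∀ u ∈ S, ∀ v ∈ S, u ≠ v → k < G.dist u v) ∧ S.ncard = n}

/-- `G` has diameter `k`. -/
def HasDiam {V : Type*} (G : SimpleGraph V) (k : ℕ) : Prop :=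
  (∀ u v, G.dist u v ≤ k) ∧ ∃ u v, G.dist u v = k

/-- The strong product `G ⊠ H`. -/
def StrongProd {α β : Type*} (G : SimpleGraph α) (H : SimpleGraph β) : SimpleGraph (α × β) where
  Adj x y := (x.1 = y.1 ∧ H.Adj x.2 y.2) ∨ (G.Adj x.1 y.1 ∧ x.2 = y.2) ∨
    (G.Adj x.1 y.1 ∧ H.Adj x.2 y.2)
  symm := ⟨fun x y h => by
    rcases h with ⟨h1, h2⟩ | ⟨h1, h2⟩ | ⟨h1, h2⟩
    · exact Or.inl ⟨h1.symm, h2.symm⟩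
    · exact Or.inr (Or.inl ⟨h1.symm, h2.symm⟩)
    · exact Or.inr (Or.inr ⟨h1.symm, h2.symm⟩)⟩
  loopless := ⟨fun x h => by
    rcases h with ⟨_, h2⟩ | ⟨h1, _⟩ | ⟨h1, _⟩
    · exact H.loopless.irrefl _ h2
    · exact G.loopless.irrefl _ h1
    · exact G.loopless.irrefl _ h1⟩

/-- The lexicographic product `G ∘ H`. -/
def LexProd {α β : Type*} (G : SimpleGraph α) (H : SimpleGraph β) : SimpleGraph (α × β) where
  Adj x y := G.Adj x.1 y.1 ∨ (x.1 = y.1 ∧ H.Adj x.2 y.2)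
  symm := ⟨fun x y h => by
    rcases h with h1 | ⟨h1, h2⟩
    · exact Or.inl h1.symm
    · exact Or.inr ⟨h1.symm, h2.symm⟩⟩
  loopless := ⟨fun x h => by
    rcases h with h1 | ⟨_, h2⟩
    · exact G.loopless.irrefl _ h1
    · exact H.loopless.irrefl _ h2⟩

section Comap

variable {V W : Type*} {G : SimpleGraph V} {G' : SimpleGraph W}

theorem Positionable.comap (f : G' →g G) (hf : Function.Injective f) {X : Set V} {u v : W}
    (hdist : G'.dist u v = G.dist (f u) (f v)) (h : Positionable G X (f u) (f v)) :
    Positionable G' (f ⁻¹' X) u v := by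
  intro p hp w hw hwX
  have hmap : (p.map f).length = G.dist (f u) (f v) := by rw [Walk.length_map, hp, hdist]
  exact (h _ hmap (f w) (Walk.support_map f p ▸ List.mem_map_of_mem hw) hwX).imp
    (fun h => hf h) (fun h => hf h)

theorem IsDualGPSet.comap (f : G' →g G) (hf : Function.Injective f)
    (hdist : ∀ u v, G'.dist u v = G.dist (f u) (f v)) {X : Set V} (hX : IsDualGPSet G X) :
    IsDualGPSet G' (f ⁻¹' X) :=
  ⟨fun u hu v hv => (hX.1 _ hu _ hv).comap f hf (hdist u v),
    fun u hu v hv => (hX.2 _ hu _ hv).comap f hf (hdist u v)⟩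

end Comap

theorem dualGPSet_inter_isometric_general {V : Type*} (G : SimpleGraph V)
    (H : G.Subgraph) (hiso : ∀ u v : H.verts, H.coe.dist u v = G.dist (u : V) (v : V))
    (X : Set V) (hX : IsDualGPSet G X) :
    IsDualGPSet H.coe {x : H.verts | (x : V) ∈ X} :=
  hX.comap H.hom H.hom_injective hiso

/-- intersection of a dual general position set with an isometric subgraph. -/
theorem dualGPSet_inter_isometric {V : Type*} (G : SimpleGraph V) (hG : G.Connected)
    (H : G.Subgraph) (hiso : ∀ u v : H.verts, H.coe.dist u v = G.dist (u : V) (v : V))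
    (X : Set V) (hX : IsDualGPSet G X) :
    IsDualGPSet H.coe {x : H.verts | (x : V) ∈ X} :=
  dualGPSet_inter_isometric_general G H hiso X hX
end

section
/- Let G be a connected graph with diameter 2 and no true twins. Then the outer general position number of G equals the independence number of G. -/
open SimpleGraph

/-!
In a graph of diameter two an interior vertex `w` of a shortest `u,v`-path satisfies
`d(u,w) = d(w,v) = 1`, so an independent set can meet such a path only in its endpoints.
Conversely, if two adjacent vertices `a, b` of an outer general position set `X` had a vertex
`w ∈ N[a] \ N[b]`, then `b a w` would be a shortest path with `a ∈ X` in its interior; hence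
`N[a] = N[b]`, which the absence of true twins forbids.
-/

namespace SimpleGraph.Walk

theorem dist_add_dist_le_length {V : Type*} [DecidableEq V] {G : SimpleGraph V} {u v w : V}
    (p : G.Walk u v) (hw : w ∈ p.support) : G.dist u w + G.dist w v ≤ p.length :=
  calc G.dist u w + G.dist w v ≤ (p.takeUntil w hw).length + (p.dropUntil w hw).length :=
        add_le_add (dist_le _) (dist_le _)
    _ = p.length := by rw [← length_append, p.take_spec hw]

end SimpleGraph.Walk

section

variable {V : Type*} {G : SimpleGraph V} {X : Set V}

theorem positionable_of_isIndepSet (hdiam : ∀ x y, G.dist x y ≤ 2) (hX : G.IsIndepSet X)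
    {u : V} (hu : u ∈ X) (v : V) : Positionable G X u v := by
  classical
  intro p hp w hw hwX
  by_contra! ⟨hwu, hwv⟩
  have hpos_uw : 0 < G.dist u w := (p.takeUntil w hw).reachable.pos_dist_of_ne hwu.symm
  have hpos_wv : 0 < G.dist w v := (p.dropUntil w hw).reachable.pos_dist_of_ne hwv
  have hsum := p.dist_add_dist_le_length hw
  have huv := hdiam u v
  exact hX hu hwX hwu.symm (dist_eq_one_iff_adj.mp (by omega))

theorem isOuterGPSet_of_isIndepSet (hdiam : ∀ x y, G.dist x y ≤ 2) (hX : G.IsIndepSet X) :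
    IsOuterGPSet G X :=
  ⟨fun _ hu v _ => positionable_of_isIndepSet hdiam hX hu v,
    fun _ hu v _ => positionable_of_isIndepSet hdiam hX hu v⟩

theorem IsOuterGPSet.positionable (hX : IsOuterGPSet G X) {u : V} (hu : u ∈ X) (v : V) :
    Positionable G X u v := by
  by_cases hv : v ∈ X
  exacts [hX.1 u hu v hv, hX.2 u hu v hv]

theorem IsOuterGPSet.closedNbhd_subset_of_adj (hX : IsOuterGPSet G X) {a b : V} (ha : a ∈ X)
    (hb : b ∈ X) (hab : G.Adj a b) : closedNbhd G a ⊆ closedNbhd G b := by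
  intro w hw
  by_contra hwb
  have haw : G.Adj a w := hw.resolve_left fun h => hwb (h ▸ Set.mem_insert_of_mem b hab.symm)
  have hbw : b ≠ w := fun h => hwb (h ▸ Set.mem_insert b _)
  have hnadj : ¬ G.Adj b w := fun h => hwb (Set.mem_insert_of_mem b h)
  let p : G.Walk b w := .cons hab.symm (.cons haw .nil)
  have hp : p.length = G.dist b w := by
    have := p.reachable.one_lt_dist_of_ne_of_not_adj hbw hnadj
    have := dist_le p
    simp only [p, Walk.length_cons, Walk.length_nil] at this ⊢
    omega
  rcases hX.positionable hb w p hp a (by simp [p]) ha with h | h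
  · exact hab.ne h
  · exact haw.ne h

theorem IsOuterGPSet.isIndepSet (htw : ∀ u v : V, ¬ TrueTwins G u v) (hX : IsOuterGPSet G X) :
    G.IsIndepSet X := fun a ha b hb hne hab =>
  htw a b ⟨hne, (hX.closedNbhd_subset_of_adj ha hb hab).antisymm
    (hX.closedNbhd_subset_of_adj hb ha hab.symm)⟩

end

theorem gpo_eq_indepNum_of_diam_two_general {V : Type*} (G : SimpleGraph V)
    (hdiam : HasDiam G 2)
    (htw : ∀ u v : V, ¬ TrueTwins G u v) :
    gpo G = _root_.indepNum G := by
  have hiff : ∀ X : Set V, IsOuterGPSet G X ↔ G.IsIndepSet X := fun _ =>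
    ⟨IsOuterGPSet.isIndepSet htw, isOuterGPSet_of_isIndepSet hdiam.1⟩
  simp only [gpo, hiff]
  rfl

/-- diameter-2 graphs without true twins have gp_o = independence number. -/
theorem gpo_eq_indepNum_of_diam_two {V : Type*} [Fintype V] (G : SimpleGraph V)
    (hG : G.Connected) (hdiam : HasDiam G 2)
    (htw : ∀ u v : V, ¬ TrueTwins G u v) :
    gpo G = _root_.indepNum G :=
  gpo_eq_indepNum_of_diam_two_general G hdiam htw
end

section
/- If G is a connected graph with diameter k ≥ 2, then the outer general position number of G is at least the (k−1)-independence number of G, i.e. gp_o(G) ≥ α_{k−1}(G). -/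
open SimpleGraph

/-! A vertex `w ≠ v` on a shortest `u,v`-path is strictly closer to `u` than `v` is. In a graph
of diameter `k`, every other vertex of a `(k-1)`-independent set `S` is at distance at least `k`
from `u ∈ S`, hence no closer than any `v`, so no shortest path from `u` passes through `S`. Thus
every `(k-1)`-independent set is an outer general position set. -/

theorem bddAbove_setOf_ncard {V : Type*} [Finite V] (P : Set V → Prop) :
    BddAbove {n | ∃ X : Set V, P X ∧ X.ncard = n} :=
  ⟨Nat.card V, by rintro n ⟨X, -, rfl⟩; exact Set.ncard_le_card X⟩

namespace SimpleGraph

variable {V : Type*} {G : SimpleGraph V}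

theorem Walk.dist_add_dist_le_of_mem_support {u v w : V} {p : G.Walk u v}
    (hp : p.length = G.dist u v) (hw : w ∈ p.support) :
    G.dist u w + G.dist w v ≤ G.dist u v := by
  obtain ⟨q, r, rfl⟩ := Walk.mem_support_iff_exists_append.mp hw
  rw [← hp, Walk.length_append]
  exact add_le_add (dist_le q) (dist_le r)

theorem Walk.dist_lt_of_mem_support_of_ne {u v w : V} {p : G.Walk u v}
    (hp : p.length = G.dist u v) (hw : w ∈ p.support) (hwv : w ≠ v) :
    G.dist u w < G.dist u v := by
  obtain ⟨-, r, -⟩ := Walk.mem_support_iff_exists_append.mp hw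
  have := r.reachable.pos_dist_of_ne hwv
  have := Walk.dist_add_dist_le_of_mem_support hp hw
  omega

theorem positionable_of_forall_dist_le {X : Set V} {u v : V}
    (h : ∀ w ∈ X, w ≠ u → G.dist u v ≤ G.dist u w) : Positionable G X u v := by
  intro p hp w hw hwX
  by_contra! hne
  exact (Walk.dist_lt_of_mem_support_of_ne hp hw hne.2).not_ge (h w hwX hne.1)

theorem isOuterGPSet_of_forall_dist_le {X : Set V}
    (h : ∀ u ∈ X, ∀ v, ∀ w ∈ X, w ≠ u → G.dist u v ≤ G.dist u w) : IsOuterGPSet G X :=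
  ⟨fun u hu v _ => positionable_of_forall_dist_le (h u hu v),
    fun u hu v _ => positionable_of_forall_dist_le (h u hu v)⟩

theorem isOuterGPSet_of_pred_lt_dist {k : ℕ} (hdiam : ∀ u v, G.dist u v ≤ k) {S : Set V}
    (hS : ∀ u ∈ S, ∀ v ∈ S, u ≠ v → k - 1 < G.dist u v) : IsOuterGPSet G S :=
  isOuterGPSet_of_forall_dist_le fun u hu v w hw hwu =>
    (hdiam u v).trans (by have := hS u hu w hw (Ne.symm hwu); omega)

end SimpleGraph

theorem gpo_ge_kIndepNum_general {V : Type*} [Fintype V] (G : SimpleGraph V)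
    (k : ℕ) (hdiam : HasDiam G k) :
    kIndepNum G (k - 1) ≤ gpo G :=
  csSup_le_csSup (bddAbove_setOf_ncard _) ⟨0, ∅, by simp⟩
    fun _ ⟨S, hS, hcard⟩ => ⟨S, isOuterGPSet_of_pred_lt_dist hdiam.1 hS, hcard⟩

/-- if diam(G) = k ≥ 2 then gp_o(G) ≥ α_{k-1}(G). -/
theorem gpo_ge_kIndepNum {V : Type*} [Fintype V] (G : SimpleGraph V)
    (hG : G.Connected) (k : ℕ) (hk : 2 ≤ k) (hdiam : HasDiam G k) :
    kIndepNum G (k - 1) ≤ gpo G :=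
  gpo_ge_kIndepNum_general G k hdiam
end

section
/- In a connected graph G with diameter 2, two vertices u, v are mutually maximally distant if and only if d(u,v) = 2 or u and v are true twins. -/
open SimpleGraph

/-!
In diameter two every pair at distance two is diametral, hence mutually maximally distant, and a
vertex is never maximally distant from itself once it has a neighbour. For adjacent `u`, `v`,
being maximally distant from `v` says that every neighbour of `u` lies within distance one of `v`,
i.e. `N[u] ⊆ N[v]`; so mutual maximal distance of adjacent vertices is exactly true twinship.
-/

namespace SimpleGraph

variable {V : Type*} {G : SimpleGraph V} {u v w : V}

lemma mem_closedNbhd_iff_dist_le_one (h : G.Reachable v w) :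
    w ∈ closedNbhd G v ↔ G.dist v w ≤ 1 := by
  rcases eq_or_ne v w with rfl | hne
  · simp [closedNbhd]
  · have hpos := h.pos_dist_of_ne hne
    have hw : w ≠ v := hne.symm
    simp only [closedNbhd, Set.mem_insert_iff, hw, mem_neighborSet, false_or,
      ← dist_eq_one_iff_adj]
    omega

lemma maxDistant_iff_closedNbhd_subset (h : G.Adj u v) :
    MaxDistant G u v ↔ closedNbhd G u ⊆ closedNbhd G v := by
  have hvu : G.dist v u = 1 := dist_eq_one_iff_adj.mpr h.symm
  constructor
  · rintro hmax z (rfl | hz)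
    · exact Or.inr h.symm
    · have hreach : G.Reachable v z := h.symm.reachable.trans hz.reachable
      rw [mem_closedNbhd_iff_dist_le_one hreach]
      exact hvu ▸ hmax z hz
  · intro hsub z hz
    have hreach : G.Reachable v z := h.symm.reachable.trans hz.reachable
    rw [hvu, ← mem_closedNbhd_iff_dist_le_one hreach]
    exact hsub (Or.inr hz)

lemma mmd_iff_trueTwins_of_adj (h : G.Adj u v) : MMD G u v ↔ TrueTwins G u v := by
  rw [MMD, TrueTwins, maxDistant_iff_closedNbhd_subset h,
    maxDistant_iff_closedNbhd_subset h.symm, ← Set.Subset.antisymm_iff]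
  exact ⟨fun hN => ⟨h.ne, hN⟩, And.right⟩

lemma mmd_of_forall_dist_le (h : ∀ x y, G.dist x y ≤ G.dist u v) : MMD G u v :=
  ⟨fun w _ => (h v w).trans_eq dist_comm, fun w _ => h u w⟩

lemma not_maxDistant_self [Nontrivial V] (hG : G.Preconnected) (u : V) : ¬ MaxDistant G u u := by
  obtain ⟨w, huw⟩ := hG.exists_adj_of_nontrivial u
  intro hmax
  have := hmax w huw
  rw [dist_self, nonpos_iff_eq_zero, huw.reachable.dist_eq_zero_iff] at this
  exact huw.ne this

end SimpleGraph

/-- in a connected graph of diameter 2, MMD pairs are exactly the pairs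
at distance 2 together with the pairs of true twins. -/
theorem mmd_iff_of_diam_two {V : Type*} (G : SimpleGraph V) (hG : G.Connected)
    (hdiam : HasDiam G 2) (u v : V) :
    MMD G u v ↔ G.dist u v = 2 ∨ TrueTwins G u v := by
  obtain ⟨hle, x, y, hxy⟩ := hdiam
  have : Nontrivial V := ⟨x, y, by rintro rfl; simp at hxy⟩
  rcases eq_or_ne u v with rfl | hne
  · simp [MMD, not_maxDistant_self hG.preconnected, TrueTwins]
  have hdist : G.dist u v = 1 ∨ G.dist u v = 2 := by
    have := hG.pos_dist_of_ne hne
    have := hle u v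
    omega
  rcases hdist with h1 | h2
  · rw [mmd_iff_trueTwins_of_adj (dist_eq_one_iff_adj.mp h1), h1]
    simp
  · exact iff_of_true (mmd_of_forall_dist_le fun a b => h2 ▸ hle a b) (Or.inl h2)
end

section
/- For graphs G and H, a vertex (g,h) of the strong product G ⊠ H is simplicial if and only if g is simplicial in G and h is simplicial in H; that is, S(G ⊠ H) = S(G) × S(H). -/
open SimpleGraph

/-!
Once every vertex is regarded as adjacent to itself, adjacency in `G ⊠ H` is coordinatewise
adjacency, so `N[(g, h)] = N[g] × N[h]`. A product of two nonempty sets is a clique for a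
coordinatewise relation exactly when each factor is a clique, and both closed neighborhoods
contain their centre.
-/

section

variable {α β : Type*}

lemma forall_mem_prod_and_iff {s : Set α} {t : Set β} (hs : s.Nonempty) (ht : t.Nonempty)
    {r : α → α → Prop} {r' : β → β → Prop} :
    (∀ p ∈ s ×ˢ t, ∀ q ∈ s ×ˢ t, r p.1 q.1 ∧ r' p.2 q.2) ↔
      (∀ a ∈ s, ∀ b ∈ s, r a b) ∧ ∀ a ∈ t, ∀ b ∈ t, r' a b := by
  obtain ⟨a₀, ha₀⟩ := hs
  obtain ⟨b₀, hb₀⟩ := ht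
  refine ⟨fun h => ⟨fun a ha b hb => ?_, fun a ha b hb => ?_⟩,
    fun ⟨h, h'⟩ p hp q hq => ⟨h _ hp.1 _ hq.1, h' _ hp.2 _ hq.2⟩⟩
  · exact (h (a, b₀) ⟨ha, hb₀⟩ (b, b₀) ⟨hb, hb₀⟩).1
  · exact (h (a₀, a) ⟨ha₀, ha⟩ (a₀, b) ⟨ha₀, hb⟩).2

lemma mem_closedNbhd_iff (G : SimpleGraph α) {u v : α} :
    v ∈ closedNbhd G u ↔ u = v ∨ G.Adj u v := by
  rw [closedNbhd, Set.mem_insert_iff, mem_neighborSet, eq_comm]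

lemma mem_closedNbhd_self (G : SimpleGraph α) (u : α) : u ∈ closedNbhd G u :=
  Set.mem_insert u _

lemma isSimplicial_iff_eq_or_adj (G : SimpleGraph α) {u : α} :
    IsSimplicial G u ↔ ∀ x ∈ closedNbhd G u, ∀ y ∈ closedNbhd G u, x = y ∨ G.Adj x y := by
  simp only [IsSimplicial, or_iff_not_imp_left]

lemma eq_or_strongProd_adj_iff (G : SimpleGraph α) (H : SimpleGraph β) {x y : α × β} :
    (x = y ∨ (StrongProd G H).Adj x y) ↔
      (x.1 = y.1 ∨ G.Adj x.1 y.1) ∧ (x.2 = y.2 ∨ H.Adj x.2 y.2) := by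
  obtain ⟨x₁, x₂⟩ := x
  obtain ⟨y₁, y₂⟩ := y
  simp only [StrongProd, Prod.mk.injEq]
  tauto

lemma closedNbhd_strongProd (G : SimpleGraph α) (H : SimpleGraph β) (g : α) (h : β) :
    closedNbhd (StrongProd G H) (g, h) = closedNbhd G g ×ˢ closedNbhd H h := by
  ext p
  simp only [mem_closedNbhd_iff, eq_or_strongProd_adj_iff, Set.mem_prod]

lemma isSimplicial_strongProd_iff (G : SimpleGraph α) (H : SimpleGraph β) (g : α) (h : β) :
    IsSimplicial (StrongProd G H) (g, h) ↔ IsSimplicial G g ∧ IsSimplicial H h := by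
  simp only [isSimplicial_iff_eq_or_adj, eq_or_strongProd_adj_iff, closedNbhd_strongProd]
  exact forall_mem_prod_and_iff (r := fun x y => x = y ∨ G.Adj x y)
    (r' := fun x y => x = y ∨ H.Adj x y)
    ⟨g, mem_closedNbhd_self G g⟩ ⟨h, mem_closedNbhd_self H h⟩

end

/-- simplicial vertices of a strong product, S(G ⊠ H) = S(G) × S(H). -/
theorem simplicial_strongProd {α β : Type*} (G : SimpleGraph α) (H : SimpleGraph β) :
    (∀ (g : α) (h : β), IsSimplicial (StrongProd G H) (g, h) ↔
      IsSimplicial G g ∧ IsSimplicial H h) ∧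
    {p : α × β | IsSimplicial (StrongProd G H) p} =
      {p : α × β | IsSimplicial G p.1 ∧ IsSimplicial H p.2} :=
  ⟨isSimplicial_strongProd_iff G H, Set.ext fun p => isSimplicial_strongProd_iff G H p.1 p.2⟩
end

section
/- If H is a connected graph and n ≥ 1, then gp_d(K_n ⊠ H) = n · gp_d(H). -/
open SimpleGraph

/-! Projecting a walk of `K_n ⊠ H` to `H`, i.e. dropping its steps inside a fibre `K_n × {h}`,
does not increase its length, while an `H`-walk of positive length lifts to a walk of the same
length between any two layers. Hence vertices with different `H`-coordinates are exactly as far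
apart as these coordinates are in `H`. It follows that every layer of a dual general position set
of `K_n ⊠ H` is a dual general position set of `H`, which gives `≤`. Conversely, for such a set `S`
of `H` the set `V(K_n) × S` is one of `K_n ⊠ H`: a geodesic projects to a geodesic of `H`, and a
vertex of a geodesic sharing its `H`-coordinate with an endpoint must be that endpoint. -/

namespace SimpleGraph.Walk

variable {V : Type*} {G : SimpleGraph V} {u v w : V} {p : G.Walk u v}

theorem dist_add_dist_of_mem_support (hp : p.length = G.dist u v) (hw : w ∈ p.support) :
    G.dist u w + G.dist w v = G.dist u v := by
  classical
  rw [← length_eq_dist_of_subwalk hp (p.isSubwalk_takeUntil hw),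
    ← length_eq_dist_of_subwalk hp (p.isSubwalk_dropUntil hw), ← length_append,
    p.take_spec hw, hp]

theorem eq_start_of_mem_support_of_dist_eq (hp : p.length = G.dist u v) (hw : w ∈ p.support)
    (h : G.dist w v = G.dist u v) : w = u := by
  classical
  have hreach : G.Reachable u w := ⟨p.takeUntil w hw⟩
  have := dist_add_dist_of_mem_support hp hw
  exact ((hreach.dist_eq_zero_iff).mp (by omega)).symm

theorem eq_end_of_mem_support_of_dist_eq (hp : p.length = G.dist u v) (hw : w ∈ p.support)
    (h : G.dist u w = G.dist u v) : w = v := by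
  classical
  have hreach : G.Reachable w v := ⟨p.dropUntil w hw⟩
  have := dist_add_dist_of_mem_support hp hw
  exact (hreach.dist_eq_zero_iff).mp (by omega)

theorem eq_or_eq_of_mem_support_of_dist_le_one (hp : p.length = G.dist u v)
    (hw : w ∈ p.support) (h : G.dist u v ≤ 1) : w = u ∨ w = v := by
  have := dist_add_dist_of_mem_support hp hw
  rcases Nat.eq_zero_or_pos (G.dist u w) with h0 | h0
  · exact .inl (eq_start_of_mem_support_of_dist_eq hp hw (by omega))
  · exact .inr (eq_end_of_mem_support_of_dist_eq hp hw (by omega))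

end SimpleGraph.Walk

theorem positionable_self {V : Type*} (G : SimpleGraph V) (X : Set V) (u : V) :
    Positionable G X u u := fun _ hp _ hw _ =>
  Walk.eq_or_eq_of_mem_support_of_dist_le_one hp hw (by simp)

theorem isDualGPSet_empty {V : Type*} (G : SimpleGraph V) : IsDualGPSet G ∅ :=
  ⟨fun _ hu => hu.elim, fun _ _ _ _ _ _ _ _ hw => hw.elim⟩

theorem bddAbove_ncard_isDualGPSet {V : Type*} [Finite V] (G : SimpleGraph V) :
    BddAbove {m | ∃ X : Set V, IsDualGPSet G X ∧ X.ncard = m} :=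
  ⟨Nat.card V, by rintro _ ⟨X, -, rfl⟩; exact X.ncard_le_card⟩

theorem IsDualGPSet.ncard_le_gpd {V : Type*} [Finite V] {G : SimpleGraph V} {X : Set V}
    (hX : IsDualGPSet G X) : X.ncard ≤ gpd G :=
  le_csSup (bddAbove_ncard_isDualGPSet G) ⟨X, hX, rfl⟩

theorem exists_isDualGPSet_ncard_eq_gpd {V : Type*} [Finite V] (G : SimpleGraph V) :
    ∃ X : Set V, IsDualGPSet G X ∧ X.ncard = gpd G := by
  have hne : {m | ∃ X : Set V, IsDualGPSet G X ∧ X.ncard = m}.Nonempty :=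
    ⟨0, ∅, isDualGPSet_empty G, Set.ncard_empty V⟩
  exact Nat.sSup_mem hne (bddAbove_ncard_isDualGPSet G)

theorem Set.ncard_eq_sum_ncard_preimage_mk {α β : Type*} [Fintype α] [Finite β]
    (X : Set (α × β)) : X.ncard = ∑ i, (Prod.mk i ⁻¹' X).ncard := by
  have hdisj : Pairwise fun i j =>
      Disjoint ({i} ×ˢ (Prod.mk i ⁻¹' X)) ({j} ×ˢ (Prod.mk j ⁻¹' X)) :=
    fun i j hij => Set.disjoint_prod.mpr (.inl (Set.disjoint_singleton.mpr hij))
  calc X.ncard = (⋃ i, {i} ×ˢ (Prod.mk i ⁻¹' X)).ncard := by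
        congr 1; ext ⟨i, b⟩; simp
    _ = ∑ i, (Prod.mk i ⁻¹' X).ncard := by
        rw [Set.ncard_iUnion_of_finite (fun _ => Set.toFinite _) hdisj, finsum_eq_sum_of_fintype]
        simp [Set.ncard_prod]

namespace StrongProd

variable {α β : Type*} {G : SimpleGraph α} {H : SimpleGraph β}

theorem snd_adj_of_adj_of_ne {x y : α × β} (hxy : (StrongProd G H).Adj x y) (hne : x.2 ≠ y.2) :
    H.Adj x.2 y.2 := by
  rcases hxy with ⟨-, h⟩ | ⟨-, h⟩ | ⟨-, h⟩
  exacts [h, absurd h hne, h]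

def layerHom (i : α) : H →g StrongProd G H where
  toFun h := (i, h)
  map_rel' h := .inl ⟨rfl, h⟩

open scoped Classical in
noncomputable def sndWalk : ∀ {x y : α × β}, (StrongProd G H).Walk x y → H.Walk x.2 y.2
  | _, _, .nil => .nil
  | x, _, .cons (v := z) hxz p =>
      if h : x.2 = z.2 then (sndWalk p).copy h.symm rfl
      else .cons (snd_adj_of_adj_of_ne hxz h) (sndWalk p)

theorem length_sndWalk_le {x y : α × β} (p : (StrongProd G H).Walk x y) :
    (sndWalk p).length ≤ p.length := by
  induction p with
  | nil => simp [sndWalk]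
  | cons _ p ih =>
    simp only [sndWalk]
    split <;> simp [ih, Nat.le_succ_of_le ih]

theorem snd_mem_support_sndWalk {x y w : α × β} {p : (StrongProd G H).Walk x y}
    (hw : w ∈ p.support) : w.2 ∈ (sndWalk p).support := by
  induction p with
  | nil => simp_all [sndWalk]
  | cons _ p ih =>
    simp only [Walk.support_cons, List.mem_cons] at hw
    simp only [sndWalk]
    split
    · rename_i h
      rcases hw with rfl | hw
      · simp [h]
      · simpa using ih hw
    · rcases hw with rfl | hw
      · simp
      · simp [ih hw]

theorem top_left_adj_of_adj (i j : α) {h h' : β} (hh' : H.Adj h h') :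
    (StrongProd (⊤ : SimpleGraph α) H).Adj (i, h) (j, h') := by
  by_cases hij : i = j
  exacts [.inl ⟨hij, hh'⟩, .inr (.inr ⟨hij, hh'⟩)]

theorem exists_top_left_walk_length_eq (i j : α) {h h' : β} (q : H.Walk h h') (hne : h ≠ h') :
    ∃ p : (StrongProd (⊤ : SimpleGraph α) H).Walk (i, h) (j, h'), p.length = q.length := by
  cases q with
  | nil => exact absurd rfl hne
  | cons hh' q => exact ⟨.cons (top_left_adj_of_adj i j hh') (q.map (layerHom j)),
    congrArg (· + 1) (q.length_map _)⟩

theorem edist_top_left {i j : α} {h h' : β} (hne : h ≠ h') :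
    (StrongProd (⊤ : SimpleGraph α) H).edist (i, h) (j, h') = H.edist h h' := by
  refine le_antisymm (le_iInf fun q => ?_) (le_iInf fun p => ?_)
  · obtain ⟨p, hp⟩ := exists_top_left_walk_length_eq i j q hne
    exact hp ▸ edist_le p
  · exact (edist_le (sndWalk p)).trans (by exact_mod_cast length_sndWalk_le p)

theorem dist_top_left {i j : α} {h h' : β} (hne : h ≠ h') :
    (StrongProd (⊤ : SimpleGraph α) H).dist (i, h) (j, h') = H.dist h h' := by
  rw [SimpleGraph.dist, SimpleGraph.dist, edist_top_left hne]

theorem dist_top_left_le_one (i j : α) (h : β) :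
    (StrongProd (⊤ : SimpleGraph α) H).dist (i, h) (j, h) ≤ 1 := by
  by_cases hij : i = j
  · simp [hij]
  · exact (dist_eq_one_iff_adj.mpr (Or.inr (Or.inl ⟨hij, rfl⟩))).le

theorem positionable_univ_prod {S : Set β} {i j : α} {h h' : β}
    (hS : h ≠ h' → Positionable H S h h') :
    Positionable (StrongProd (⊤ : SimpleGraph α) H) (Set.univ ×ˢ S) (i, h) (j, h') := by
  rintro p hp ⟨k, z⟩ hw hwX
  rcases eq_or_ne h h' with rfl | hne
  · exact p.eq_or_eq_of_mem_support_of_dist_le_one hp hw (dist_top_left_le_one i j h)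
  have hq : (sndWalk p).length = H.dist h h' :=
    le_antisymm ((length_sndWalk_le p).trans (hp.trans (dist_top_left hne)).le) (dist_le _)
  rcases hS hne (sndWalk p) hq z (snd_mem_support_sndWalk hw) hwX.2 with rfl | rfl
  · exact .inl <| p.eq_start_of_mem_support_of_dist_eq hp hw <| by
      rw [dist_top_left hne, dist_top_left hne]
  · exact .inr <| p.eq_end_of_mem_support_of_dist_eq hp hw <| by
      rw [dist_top_left hne, dist_top_left hne]

theorem isDualGPSet_univ_prod {S : Set β} (hS : IsDualGPSet H S) :
    IsDualGPSet (StrongProd (⊤ : SimpleGraph α) H) (Set.univ ×ˢ S) :=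
  ⟨fun _ hu _ hv => positionable_univ_prod fun _ => hS.1 _ hu.2 _ hv.2,
    fun _ hu _ hv => positionable_univ_prod fun _ =>
      hS.2 _ (fun h => hu ⟨trivial, h⟩) _ (fun h => hv ⟨trivial, h⟩)⟩

theorem positionable_preimage_mk {X : Set (α × β)} {i : α} {h h' : β}
    (hX : Positionable (StrongProd (⊤ : SimpleGraph α) H) X (i, h) (i, h')) :
    Positionable H (Prod.mk i ⁻¹' X) h h' := by
  rcases eq_or_ne h h' with rfl | hne
  · exact positionable_self H _ h
  intro q hq w hw hwX
  have hlift : (q.map (layerHom (G := ⊤) i)).length =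
      (StrongProd (⊤ : SimpleGraph α) H).dist (i, h) (i, h') := by
    rw [Walk.length_map, hq, dist_top_left hne]
  have hmem : (i, w) ∈ (q.map (layerHom (G := ⊤) i)).support := by
    rw [Walk.support_map]; exact List.mem_map_of_mem hw
  exact (hX _ hlift _ hmem hwX).imp (congrArg Prod.snd) (congrArg Prod.snd)

theorem isDualGPSet_preimage_mk {X : Set (α × β)}
    (hX : IsDualGPSet (StrongProd (⊤ : SimpleGraph α) H) X) (i : α) :
    IsDualGPSet H (Prod.mk i ⁻¹' X) :=
  ⟨fun _ hh _ hh' => positionable_preimage_mk (hX.1 _ hh _ hh'),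
    fun _ hh _ hh' => positionable_preimage_mk (hX.2 _ hh _ hh')⟩

theorem gpd_top_left [Fintype α] [Finite β] :
    gpd (StrongProd (⊤ : SimpleGraph α) H) = Fintype.card α * gpd H := by
  obtain ⟨X, hX, hXcard⟩ := exists_isDualGPSet_ncard_eq_gpd (StrongProd (⊤ : SimpleGraph α) H)
  obtain ⟨S, hS, hScard⟩ := exists_isDualGPSet_ncard_eq_gpd H
  apply le_antisymm
  · calc gpd (StrongProd ⊤ H) = ∑ i, (Prod.mk i ⁻¹' X).ncard := by
          rw [← hXcard, Set.ncard_eq_sum_ncard_preimage_mk]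
      _ ≤ ∑ _i : α, gpd H :=
          Finset.sum_le_sum fun i _ => (isDualGPSet_preimage_mk hX i).ncard_le_gpd
      _ = Fintype.card α * gpd H := by simp
  · calc Fintype.card α * gpd H = (Set.univ ×ˢ S : Set (α × β)).ncard := by
          rw [Set.ncard_prod, Set.ncard_univ, Nat.card_eq_fintype_card, hScard]
      _ ≤ gpd (StrongProd ⊤ H) := (isDualGPSet_univ_prod hS).ncard_le_gpd

end StrongProd

theorem gpd_strongProd_complete_general {β : Type*} [Fintype β] (H : SimpleGraph β)
    (n : ℕ) :
    gpd (StrongProd (⊤ : SimpleGraph (Fin n)) H) = n * gpd H := by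
  rw [StrongProd.gpd_top_left, Fintype.card_fin]

/-- gp_d(K_n ⊠ H) = n·gp_d(H). -/
theorem gpd_strongProd_complete {β : Type*} [Fintype β] (H : SimpleGraph β)
    (hH : H.Connected) (n : ℕ) (hn : 1 ≤ n) :
    gpd (StrongProd (⊤ : SimpleGraph (Fin n)) H) = n * gpd H :=
  gpd_strongProd_complete_general H n
end

section
/- Let G and H be connected graphs of order at least 2. If H is complete, then the simplicial vertices of the lexicographic product G∘H are exactly S(G) × V(H); if H is not complete, then G∘H has no simplicial vertices. -/
open SimpleGraph

/-!
The closed neighbourhood of `(g, h)` in `G ∘ H` is `N_G(g) × V(H) ∪ {g} × N_H[h]`. If `H` is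
complete, two of its vertices with different first coordinates are adjacent exactly when those
coordinates are, so it is a clique iff `N_G[g]` is. If `H` has a non-edge `uv`, then since `G` is
connected and nontrivial `g` has a neighbour `g'`, and `(g', u)`, `(g', v)` are non-adjacent
vertices of that neighbourhood.
-/

section LexProd

variable {α β : Type*} {G : SimpleGraph α} {H : SimpleGraph β}

theorem fst_mem_closedNbhd_of_mem_closedNbhd_lexProd {p q : α × β}
    (hq : q ∈ closedNbhd (LexProd G H) p) : q.1 ∈ closedNbhd G p.1 := by
  rcases hq with rfl | hq | ⟨hq, -⟩
  · exact Or.inl rfl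
  · exact Or.inr hq
  · exact Or.inl hq.symm

theorem mem_closedNbhd_lexProd_of_adj {p : α × β} {g : α} (hg : G.Adj p.1 g) (h : β) :
    (g, h) ∈ closedNbhd (LexProd G H) p :=
  Or.inr (Or.inl hg)

theorem IsSimplicial.of_lexProd {p : α × β} (hp : IsSimplicial (LexProd G H) p) :
    IsSimplicial G p.1 := by
  rintro x (rfl | hx) y (rfl | hy) hxy
  · exact absurd rfl hxy
  · exact hy
  · exact hx.symm
  · have hadj := hp _ (mem_closedNbhd_lexProd_of_adj hx p.2) _
      (mem_closedNbhd_lexProd_of_adj hy p.2) (fun h => hxy (congrArg Prod.fst h))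
    exact hadj.resolve_right fun h => hxy h.1

theorem IsSimplicial.lexProd (hH : ∀ u v : β, u ≠ v → H.Adj u v) {p : α × β}
    (hp : IsSimplicial G p.1) : IsSimplicial (LexProd G H) p := by
  intro q hq r hr hqr
  by_cases hfst : q.1 = r.1
  · exact Or.inr ⟨hfst, hH _ _ fun hsnd => hqr (Prod.ext hfst hsnd)⟩
  · exact Or.inl (hp _ (fst_mem_closedNbhd_of_mem_closedNbhd_lexProd hq) _
      (fst_mem_closedNbhd_of_mem_closedNbhd_lexProd hr) hfst)

theorem not_isSimplicial_lexProd {p : α × β} {g : α} (hg : G.Adj p.1 g) {u v : β}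
    (huv : u ≠ v) (hH : ¬ H.Adj u v) : ¬ IsSimplicial (LexProd G H) p := by
  intro hp
  rcases hp _ (mem_closedNbhd_lexProd_of_adj hg u) _ (mem_closedNbhd_lexProd_of_adj hg v)
    (fun h => huv (congrArg Prod.snd h)) with hloop | ⟨-, hadj⟩
  · exact G.loopless.irrefl _ hloop
  · exact hH hadj

end LexProd

theorem simplicial_lexProd_general {α β : Type*} [Fintype α]
    (G : SimpleGraph α) (H : SimpleGraph β) (hG : G.Connected)
    (h2G : 2 ≤ Fintype.card α) :
    ((∀ u v : β, u ≠ v → H.Adj u v) →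
      {p : α × β | IsSimplicial (LexProd G H) p} = {p : α × β | IsSimplicial G p.1}) ∧
    (¬ (∀ u v : β, u ≠ v → H.Adj u v) →
      ∀ p : α × β, ¬ IsSimplicial (LexProd G H) p) := by
  refine ⟨fun hcomplete => ?_, fun hcomplete p => ?_⟩
  · ext p
    exact ⟨IsSimplicial.of_lexProd, IsSimplicial.lexProd hcomplete⟩
  · push Not at hcomplete
    obtain ⟨u, v, huv, hnadj⟩ := hcomplete
    have : Nontrivial α := Fintype.one_lt_card_iff_nontrivial.1 h2G
    obtain ⟨g, hg⟩ := hG.preconnected.exists_adj_of_nontrivial p.1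
    exact not_isSimplicial_lexProd hg huv hnadj

/-- simplicial vertices of a lexicographic product. -/
theorem simplicial_lexProd {α β : Type*} [Fintype α] [Fintype β]
    (G : SimpleGraph α) (H : SimpleGraph β) (hG : G.Connected) (hH : H.Connected)
    (h2G : 2 ≤ Fintype.card α) (h2H : 2 ≤ Fintype.card β) :
    ((∀ u v : β, u ≠ v → H.Adj u v) →
      {p : α × β | IsSimplicial (LexProd G H) p} = {p : α × β | IsSimplicial G p.1}) ∧
    (¬ (∀ u v : β, u ≠ v → H.Adj u v) →
      ∀ p : α × β, ¬ IsSimplicial (LexProd G H) p) :=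
  simplicial_lexProd_general G H hG h2G
end
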